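/- arXiv:1706.02977 — 5 statements merged into one kernel-verified Lean document; each statement's English description precedes it below -/
import Mathlib

section
/- Let V be a type, let qC, qIP : V → ℝ be nonnegative functions, let bDG : V → ℝ, and let κ > 0 be a real number such that for every real c > 0 and every u ∈ V one has |2·bDG(u)| ≤ c⁻¹·κ·qC(u) + c·qIP(u). Let c_κ ≥ 1 and let η ≥ c_κ·κ. Then for every u ∈ V the quantity a(u) := qC(u) + 2·bDG(u) + η·qIP(u) is nonnegative. -/
lemma add_two_mul_add_mul_nonneg_of_abs_le {a b q κ η : ℝ} (hq : 0 ≤ q) (hκη : κ ≤ η)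
    (h : |2 * b| ≤ a + κ * q) : 0 ≤ a + 2 * b + η * q := by
  have hb : -(a + κ * q) ≤ 2 * b := neg_le_of_abs_le h
  nlinarith [mul_le_mul_of_nonneg_right hκη hq]

theorem stmt_0_general (V : Type*) (qC qIP : V → ℝ) (bDG : V → ℝ) (κ : ℝ)
    (hqIP : ∀ u, 0 ≤ qIP u) (hκ : 0 < κ)
    (hbound : ∀ c : ℝ, 0 < c → ∀ u : V, |2 * bDG u| ≤ c⁻¹ * κ * qC u + c * qIP u)
    (cκ : ℝ) (hcκ : 1 ≤ cκ) (η : ℝ) (hη : cκ * κ ≤ η) :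
    ∀ u : V, 0 ≤ qC u + 2 * bDG u + η * qIP u := by
  intro u
  have hκη : κ ≤ η := (le_mul_of_one_le_left hκ.le hcκ).trans hη
  refine add_two_mul_add_mul_nonneg_of_abs_le (hqIP u) hκη ?_
  simpa only [inv_mul_cancel₀ hκ.ne', one_mul] using hbound κ hκ u

theorem stmt_0 (V : Type*) (qC qIP : V → ℝ) (bDG : V → ℝ) (κ : ℝ)
    (hqC : ∀ u, 0 ≤ qC u) (hqIP : ∀ u, 0 ≤ qIP u) (hκ : 0 < κ)
    (hbound : ∀ c : ℝ, 0 < c → ∀ u : V, |2 * bDG u| ≤ c⁻¹ * κ * qC u + c * qIP u)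
    (cκ : ℝ) (hcκ : 1 ≤ cκ) (η : ℝ) (hη : cκ * κ ≤ η) :
    ∀ u : V, 0 ≤ qC u + 2 * bDG u + η * qIP u :=
  stmt_0_general V qC qIP bDG κ hqIP hκ hbound cκ hcκ η hη
end

section
/- Let V be a type, let qC, qIP : V → ℝ be nonnegative functions, let bDG : V → ℝ, and let κ > 0 be a real number such that for every real c > 0 and every u ∈ V one has |2·bDG(u)| ≤ c⁻¹·κ·qC(u) + c·qIP(u). Let c_κ > 1 and let η ≥ c_κ·κ. Define c_coer := sup over x ∈ [1, c_κ] of min(1 − x⁻¹, (c_κ − x)/c_κ). Then c_coer > 0 and for every u ∈ V, qC(u) + 2·bDG(u) + η·qIP(u) ≥ c_coer · ( qC(u) + η·qIP(u) ). -/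
/-!
Young's inequality with weight `c = x κ` gives, for every `x > 0`,
`qC + 2 bDG + η qIP ≥ (1 - x⁻¹) qC + (η - x κ) qIP`, and `η ≥ c_κ κ` turns the second
coefficient into at least `η (c_κ - x) / c_κ`. Hence each value of the function under the
supremum is a coercivity constant, and so is their supremum; it is positive because the
function is positive at the midpoint of `[1, c_κ]`.
-/

open Set

theorem Real.sSup_mul_le {S : Set ℝ} (hS : S.Nonempty) {a b : ℝ} (ha : 0 ≤ a)
    (h : ∀ m ∈ S, m * a ≤ b) : sSup S * a ≤ b := by
  rw [mul_comm, ← smul_eq_mul, ← Real.sSup_smul_of_nonneg ha]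
  refine csSup_le hS.smul_set ?_
  rintro _ ⟨m, hm, rfl⟩
  simpa only [smul_eq_mul, mul_comm a] using h m hm

theorem min_mul_add_le_mul_add_mul {a b p q : ℝ} (hp : 0 ≤ p) (hq : 0 ≤ q) :
    min a b * (p + q) ≤ a * p + b * q := by
  rw [mul_add]
  gcongr
  · exact min_le_left a b
  · exact min_le_right a b

theorem sSup_coercivity_constant_pos {cκ : ℝ} (hcκ : 1 < cκ) :
    0 < sSup ((fun x : ℝ => min (1 - x⁻¹) ((cκ - x) / cκ)) '' Icc 1 cκ) := by
  set f := fun x : ℝ => min (1 - x⁻¹) ((cκ - x) / cκ)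
  have hbdd : BddAbove (f '' Icc 1 cκ) := by
    refine ⟨1, ?_⟩
    rintro _ ⟨x, hx, rfl⟩
    have : 0 ≤ x⁻¹ := inv_nonneg.mpr (zero_le_one.trans hx.1)
    exact (min_le_left _ _).trans (by linarith)
  have hmid : (1 + cκ) / 2 ∈ Icc 1 cκ := ⟨by linarith, by linarith⟩
  have hf_mid : 0 < f ((1 + cκ) / 2) := by
    refine lt_min ?_ (div_pos (by linarith) (by linarith))
    linarith [inv_lt_one_of_one_lt₀ (show 1 < (1 + cκ) / 2 by linarith)]
  exact hf_mid.trans_le (le_csSup hbdd (mem_image_of_mem f hmid))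

theorem penalty_coeff_le {κ η cκ x : ℝ} (hcκ : 0 < cκ) (hη : cκ * κ ≤ η)
    (hx : 0 ≤ x) : (cκ - x) / cκ * η ≤ η - x * κ := by
  rw [div_mul_eq_mul_div, div_le_iff₀ hcκ]
  nlinarith [mul_le_mul_of_nonneg_left hη hx]

theorem young_weighted_le_form {V : Type*} {qC qIP bDG : V → ℝ} {κ : ℝ} (hκ : 0 < κ)
    (hbound : ∀ c : ℝ, 0 < c → ∀ u : V, |2 * bDG u| ≤ c⁻¹ * κ * qC u + c * qIP u)
    (η : ℝ) {x : ℝ} (hx : 0 < x) (u : V) :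
    (1 - x⁻¹) * qC u + (η - x * κ) * qIP u ≤ qC u + 2 * bDG u + η * qIP u := by
  have hyoung := neg_le_of_abs_le (hbound (x * κ) (mul_pos hx hκ) u)
  have hweight : (x * κ)⁻¹ * κ = x⁻¹ := by field_simp
  rw [hweight] at hyoung
  linarith

theorem stmt_1 (V : Type*) (qC qIP : V → ℝ) (bDG : V → ℝ) (κ : ℝ)
    (hqC : ∀ u, 0 ≤ qC u) (hqIP : ∀ u, 0 ≤ qIP u) (hκ : 0 < κ)
    (hbound : ∀ c : ℝ, 0 < c → ∀ u : V, |2 * bDG u| ≤ c⁻¹ * κ * qC u + c * qIP u)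
    (cκ : ℝ) (hcκ : 1 < cκ) (η : ℝ) (hη : cκ * κ ≤ η)
    (c_coer : ℝ)
    (hc_coer : c_coer = sSup ((fun x : ℝ => min (1 - x⁻¹) ((cκ - x) / cκ)) '' Set.Icc 1 cκ)) :
    0 < c_coer ∧
      ∀ u : V, c_coer * (qC u + η * qIP u) ≤ qC u + 2 * bDG u + η * qIP u := by
  have hcκ0 : 0 < cκ := zero_lt_one.trans hcκ
  have hη0 : 0 ≤ η := (mul_pos hcκ0 hκ).le.trans hη
  subst hc_coer
  refine ⟨sSup_coercivity_constant_pos hcκ, fun u => ?_⟩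
  have hηqIP : 0 ≤ η * qIP u := mul_nonneg hη0 (hqIP u)
  refine Real.sSup_mul_le ((nonempty_Icc.mpr hcκ.le).image _) (add_nonneg (hqC u) hηqIP) ?_
  rintro _ ⟨x, hx, rfl⟩
  have hx0 : 0 < x := zero_lt_one.trans_le hx.1
  calc min (1 - x⁻¹) ((cκ - x) / cκ) * (qC u + η * qIP u)
      ≤ (1 - x⁻¹) * qC u + (cκ - x) / cκ * (η * qIP u) :=
        min_mul_add_le_mul_add_mul (hqC u) hηqIP
    _ ≤ (1 - x⁻¹) * qC u + (η - x * κ) * qIP u := by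
        rw [← mul_assoc]
        gcongr
        · exact hqIP u
        · exact penalty_coeff_le hcκ0 hη hx0.le
    _ ≤ qC u + 2 * bDG u + η * qIP u := young_weighted_le_form hκ hbound η hx0 u
end

section
/- Let N ≥ 1 and n ≥ 1 be integers. Let M ∈ ℝ^{N×N} be a symmetric positive definite matrix and A ∈ ℝ^{N×N} a symmetric positive semidefinite matrix. Suppose M_(1),…,M_(n) and A_(1),…,A_(n) are symmetric N×N real matrices with Σᵢ M_(i) = M and Σᵢ A_(i) = A, and suppose for each i there is a set S_i ⊆ {1,…,N} such that: all entries of M_(i) and of A_(i) whose row or column index lies outside S_i are zero, and uᵀ·M_(i)·u > 0 for every nonzero vector u ∈ ℝᴺ supported in S_i. Then for every nonzero u ∈ ℝᴺ, (uᵀ·A·u)/(uᵀ·M·u) ≤ max over i = 1,…,n of sup{ |vᵀ·A_(i)·v| / (vᵀ·M_(i)·v) : v ∈ ℝᴺ nonzero and supported in S_i }. -/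
/-!
The matrices `M_(i)` and `A_(i)` vanish outside `S_i × S_i`, so their quadratic forms only see the
restriction of `u` to `S_i`. Hence, with `R_i` the `i`-th local supremum and `R = maxᵢ R_i`,
`uᵀ A_(i) u ≤ |uᵀ A_(i) u| ≤ R_i · uᵀ M_(i) u ≤ R · uᵀ M_(i) u`, and summing over `i` gives
`uᵀ A u ≤ R · uᵀ M u`. Since `uᵀ M u ≥ 0` and `R ≥ 0`, this bounds the quotient, also in the junk
case `uᵀ M u = 0`. Each `R_i` is finite because the quotient is scale invariant and continuous on
the compact unit sphere of vectors supported in `S_i`, where `M_(i)` is positive.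
-/

open Matrix

namespace Matrix

variable {ι : Type*} [Fintype ι] {S : Set ι}

def supportedRayleighQuotients (A M : Matrix ι ι ℝ) (S : Set ι) : Set ℝ :=
  {r | ∃ v : ι → ℝ, v ≠ 0 ∧ (∀ j ∉ S, v j = 0) ∧ r = |v ⬝ᵥ (A *ᵥ v)| / (v ⬝ᵥ (M *ᵥ v))}

theorem indicator_dotProduct_mulVec_indicator {B : Matrix ι ι ℝ}
    (hB : ∀ j l, j ∉ S ∨ l ∉ S → B j l = 0) (u : ι → ℝ) :
    S.indicator u ⬝ᵥ (B *ᵥ S.indicator u) = u ⬝ᵥ (B *ᵥ u) := by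
  simp only [dotProduct, mulVec]
  refine Finset.sum_congr rfl fun j _ => ?_
  by_cases hj : j ∈ S
  · rw [Set.indicator_of_mem hj]
    congr 1
    refine Finset.sum_congr rfl fun l _ => ?_
    by_cases hl : l ∈ S
    · rw [Set.indicator_of_mem hl]
    · simp [hB j l (Or.inr hl)]
  · simp [hB j _ (Or.inl hj)]

theorem dotProduct_mulVec_nonneg_of_supported {M : Matrix ι ι ℝ}
    (hM : ∀ j l, j ∉ S ∨ l ∉ S → M j l = 0)
    (hMpos : ∀ v : ι → ℝ, v ≠ 0 → (∀ j ∉ S, v j = 0) → 0 < v ⬝ᵥ (M *ᵥ v)) (u : ι → ℝ) :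
    0 ≤ u ⬝ᵥ (M *ᵥ u) := by
  rw [← indicator_dotProduct_mulVec_indicator hM]
  by_cases hv : S.indicator u = 0
  · simp [hv]
  · exact (hMpos _ hv fun j hj => Set.indicator_of_notMem hj u).le

theorem abs_dotProduct_mulVec_smul_div (A M : Matrix ι ι ℝ) {c : ℝ} (hc : c ≠ 0) (v : ι → ℝ) :
    |(c • v) ⬝ᵥ (A *ᵥ (c • v))| / ((c • v) ⬝ᵥ (M *ᵥ (c • v))) =
      |v ⬝ᵥ (A *ᵥ v)| / (v ⬝ᵥ (M *ᵥ v)) := by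
  simp only [mulVec_smul, smul_dotProduct, dotProduct_smul, smul_eq_mul, ← mul_assoc, abs_mul,
    abs_mul_abs_self]
  exact mul_div_mul_left _ _ (mul_self_ne_zero.mpr hc)

theorem bddAbove_supportedRayleighQuotients (A : Matrix ι ι ℝ) {M : Matrix ι ι ℝ}
    (hMpos : ∀ v : ι → ℝ, v ≠ 0 → (∀ j ∉ S, v j = 0) → 0 < v ⬝ᵥ (M *ᵥ v)) :
    BddAbove (supportedRayleighQuotients A M S) := by
  set K : Set (ι → ℝ) := Metric.sphere 0 1 ∩ {v | ∀ j ∉ S, v j = 0}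
  have hK : IsCompact K := by
    refine (isCompact_sphere 0 1).inter_right ?_
    simp only [Set.ofPred_forall]
    exact isClosed_iInter fun j => isClosed_iInter fun _ =>
      isClosed_eq (continuous_apply j) continuous_const
  have hcont : ContinuousOn (fun v : ι → ℝ => |v ⬝ᵥ (A *ᵥ v)| / (v ⬝ᵥ (M *ᵥ v))) K := by
    refine ContinuousOn.div (by fun_prop) (by fun_prop) fun w hw => (hMpos w ?_ hw.2).ne'
    exact ne_zero_of_mem_sphere one_ne_zero ⟨w, hw.1⟩
  refine (hK.bddAbove_image hcont).mono ?_
  rintro r ⟨v, hv, hsupp, rfl⟩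
  have hnorm : ‖v‖⁻¹ ≠ 0 := inv_ne_zero (norm_ne_zero_iff.mpr hv)
  refine ⟨‖v‖⁻¹ • v, ⟨?_, fun j hj => by simp [hsupp j hj]⟩,
    abs_dotProduct_mulVec_smul_div A M hnorm v⟩
  simp [norm_smul, norm_ne_zero_iff.mpr hv]

theorem sSup_supportedRayleighQuotients_nonneg (A : Matrix ι ι ℝ) {M : Matrix ι ι ℝ}
    (hMpos : ∀ v : ι → ℝ, v ≠ 0 → (∀ j ∉ S, v j = 0) → 0 < v ⬝ᵥ (M *ᵥ v)) :
    0 ≤ sSup (supportedRayleighQuotients A M S) := by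
  refine Real.sSup_nonneg ?_
  rintro r ⟨v, hv, hsupp, rfl⟩
  exact div_nonneg (abs_nonneg _) (hMpos v hv hsupp).le

theorem dotProduct_mulVec_le_sSup_mul {A M : Matrix ι ι ℝ}
    (hA : ∀ j l, j ∉ S ∨ l ∉ S → A j l = 0) (hM : ∀ j l, j ∉ S ∨ l ∉ S → M j l = 0)
    (hMpos : ∀ v : ι → ℝ, v ≠ 0 → (∀ j ∉ S, v j = 0) → 0 < v ⬝ᵥ (M *ᵥ v)) (u : ι → ℝ) :
    u ⬝ᵥ (A *ᵥ u) ≤ sSup (supportedRayleighQuotients A M S) * (u ⬝ᵥ (M *ᵥ u)) := by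
  rw [← indicator_dotProduct_mulVec_indicator hA, ← indicator_dotProduct_mulVec_indicator hM]
  set v := S.indicator u
  by_cases hv : v = 0
  · simp [hv]
  have hsupp : ∀ j ∉ S, v j = 0 := fun j hj => Set.indicator_of_notMem hj u
  have hmem : |v ⬝ᵥ (A *ᵥ v)| / (v ⬝ᵥ (M *ᵥ v)) ∈ supportedRayleighQuotients A M S :=
    ⟨v, hv, hsupp, rfl⟩
  have hle := le_csSup (bddAbove_supportedRayleighQuotients A hMpos) hmem
  exact (le_abs_self _).trans ((div_le_iff₀ (hMpos v hv hsupp)).mp hle)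

end Matrix

theorem stmt_3_general (N n : ℕ) (hn : 1 ≤ n)
    (M A : Matrix (Fin N) (Fin N) ℝ)
    (Mi Ai : Fin n → Matrix (Fin N) (Fin N) ℝ)
    (hMsum : ∑ i, Mi i = M) (hAsum : ∑ i, Ai i = A)
    (S : Fin n → Set (Fin N))
    (hMzero : ∀ i, ∀ j l : Fin N, j ∉ S i ∨ l ∉ S i → Mi i j l = 0)
    (hAzero : ∀ i, ∀ j l : Fin N, j ∉ S i ∨ l ∉ S i → Ai i j l = 0)
    (hMipos : ∀ i, ∀ u : Fin N → ℝ, u ≠ 0 → (∀ j ∉ S i, u j = 0) →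
      0 < u ⬝ᵥ (Mi i *ᵥ u)) :
    ∀ u : Fin N → ℝ, u ≠ 0 →
      (u ⬝ᵥ (A *ᵥ u)) / (u ⬝ᵥ (M *ᵥ u)) ≤
        Finset.univ.sup' ⟨⟨0, hn⟩, Finset.mem_univ _⟩
          (fun i => sSup {r : ℝ | ∃ v : Fin N → ℝ, v ≠ 0 ∧ (∀ j ∉ S i, v j = 0) ∧
            r = |v ⬝ᵥ (Ai i *ᵥ v)| / (v ⬝ᵥ (Mi i *ᵥ v))}) := by
  intro u _
  set R := Finset.univ.sup' ⟨⟨0, hn⟩, Finset.mem_univ _⟩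
    fun i => sSup (supportedRayleighQuotients (Ai i) (Mi i) (S i))
  have hRi (i : Fin n) : sSup (supportedRayleighQuotients (Ai i) (Mi i) (S i)) ≤ R :=
    Finset.le_sup' (fun i => sSup (supportedRayleighQuotients (Ai i) (Mi i) (S i)))
      (Finset.mem_univ i)
  have hMi (i : Fin n) : 0 ≤ u ⬝ᵥ (Mi i *ᵥ u) :=
    dotProduct_mulVec_nonneg_of_supported (hMzero i) (hMipos i) u
  have hR : 0 ≤ R := (sSup_supportedRayleighQuotients_nonneg _ (hMipos ⟨0, hn⟩)).trans (hRi _)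
  have hMu : 0 ≤ u ⬝ᵥ (M *ᵥ u) := by
    rw [← hMsum, sum_mulVec, dotProduct_sum]
    exact Finset.sum_nonneg fun i _ => hMi i
  refine div_le_of_le_mul₀ hMu hR ?_
  calc u ⬝ᵥ (A *ᵥ u) = ∑ i, u ⬝ᵥ (Ai i *ᵥ u) := by rw [← hAsum, sum_mulVec, dotProduct_sum]
    _ ≤ ∑ i, R * (u ⬝ᵥ (Mi i *ᵥ u)) := Finset.sum_le_sum fun i _ =>
        (dotProduct_mulVec_le_sSup_mul (hAzero i) (hMzero i) (hMipos i) u).trans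
          (mul_le_mul_of_nonneg_right (hRi i) (hMi i))
    _ = R * (u ⬝ᵥ (M *ᵥ u)) := by rw [← Finset.mul_sum, ← hMsum, sum_mulVec, dotProduct_sum]

theorem stmt_3 (N n : ℕ) (hN : 1 ≤ N) (hn : 1 ≤ n)
    (M A : Matrix (Fin N) (Fin N) ℝ)
    (hM : M.PosDef) (hA : A.PosSemidef)
    (Mi Ai : Fin n → Matrix (Fin N) (Fin N) ℝ)
    (hMisymm : ∀ i, (Mi i).IsSymm) (hAisymm : ∀ i, (Ai i).IsSymm)
    (hMsum : ∑ i, Mi i = M) (hAsum : ∑ i, Ai i = A)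
    (S : Fin n → Set (Fin N))
    (hMzero : ∀ i, ∀ j l : Fin N, j ∉ S i ∨ l ∉ S i → Mi i j l = 0)
    (hAzero : ∀ i, ∀ j l : Fin N, j ∉ S i ∨ l ∉ S i → Ai i j l = 0)
    (hMipos : ∀ i, ∀ u : Fin N → ℝ, u ≠ 0 → (∀ j ∉ S i, u j = 0) →
      0 < u ⬝ᵥ (Mi i *ᵥ u)) :
    ∀ u : Fin N → ℝ, u ≠ 0 →
      (u ⬝ᵥ (A *ᵥ u)) / (u ⬝ᵥ (M *ᵥ u)) ≤
        Finset.univ.sup' ⟨⟨0, hn⟩, Finset.mem_univ _⟩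
          (fun i => sSup {r : ℝ | ∃ v : Fin N → ℝ, v ≠ 0 ∧ (∀ j ∉ S i, v j = 0) ∧
            r = |v ⬝ᵥ (Ai i *ᵥ v)| / (v ⬝ᵥ (Mi i *ᵥ v))}) :=
  stmt_3_general N n hn M A Mi Ai hMsum hAsum S hMzero hAzero hMipos
end

section
/- Let d, m ≥ 1 be integers, let C be a linear endomorphism of the space of real d×m matrices that is self-adjoint with respect to the Frobenius inner product ⟨σ,τ⟩ = Σ_{k,l} σ_{kl}·τ_{kl} and satisfies ⟨σ, C(σ)⟩ ≥ 0 for all d×m real matrices σ, and let n ∈ ℝ^d. Define the m×m real matrix c_n by (c_n)_{ij} := ⟨ n⊗eᵢ , C(n⊗eⱼ) ⟩, where (n⊗u) is the d×m matrix with entries (n⊗u)_{k,l} = n_k·u_l and e₁,…,e_m is the standard basis of ℝ^m. If v ∈ ℝ^m is such that vᵢ = ⟨ n⊗eᵢ , C(σ) ⟩ for all i, for some d×m real matrix σ, and vᵀ·c_n·v = 0, then v = 0. -/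
/-!
The form `B σ τ = frob σ (C τ)` is symmetric and positive semidefinite, and `cn` is its Gram
matrix on the matrices `n ⊗ eᵢ`, so `vᵀ cn v = B N N` for `N = n ⊗ v`. For a positive
semidefinite form, `B N N = 0` forces `B N · = 0`: the function `t ↦ B (σ + t N) (σ + t N)` is
then affine in `t` and nonnegative. Since `v` is the contraction `n · C σ`, we get
`v ⬝ᵥ v = B N σ = 0`.
-/

open Matrix

/-- The Frobenius inner product on `d × m` real matrices. -/
def frob {d m : ℕ} (σ τ : Matrix (Fin d) (Fin m) ℝ) : ℝ :=
  ∑ k, ∑ l, σ k l * τ k l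

theorem eq_zero_of_forall_nonneg_add_mul {𝕜 : Type*} [Field 𝕜] [LinearOrder 𝕜]
    [IsStrictOrderedRing 𝕜] {a b : 𝕜} (h : ∀ t, 0 ≤ a + t * b) : b = 0 := by
  by_contra hb
  have := h (-(a + 1) / b)
  rw [div_mul_cancel₀ _ hb] at this
  linarith

namespace LinearMap.BilinForm

variable {𝕜 M : Type*} [Field 𝕜] [LinearOrder 𝕜] [IsStrictOrderedRing 𝕜]
  [AddCommGroup M] [Module 𝕜 M] {B : LinearMap.BilinForm 𝕜 M}

theorem IsPosSemidef.apply_eq_zero_of_self_eq_zero (hB : IsPosSemidef B) {x : M}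
    (hx : B x x = 0) (y : M) : B x y = 0 := by
  have h2 : (2 : 𝕜) * B x y = 0 := by
    refine eq_zero_of_forall_nonneg_add_mul (a := B y y) fun t => ?_
    calc 0 ≤ B (y + t • x) (y + t • x) := hB.nonneg _
      _ = B y y + t * (2 * B x y) := by
        simp only [map_add, map_smul, LinearMap.add_apply, LinearMap.smul_apply, hx,
          hB.isSymm.eq y x, smul_eq_mul]
        ring
  simpa using h2

end LinearMap.BilinForm

section Frobenius

variable {d m : ℕ}

def frobForm : LinearMap.BilinForm ℝ (Matrix (Fin d) (Fin m) ℝ) :=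
  LinearMap.mk₂ ℝ frob
    (fun _ _ _ => by simp only [frob, Matrix.add_apply, add_mul, Finset.sum_add_distrib])
    (fun _ _ _ => by simp only [frob, Matrix.smul_apply, smul_eq_mul, mul_assoc, Finset.mul_sum])
    (fun _ _ _ => by simp only [frob, Matrix.add_apply, mul_add, Finset.sum_add_distrib])
    (fun _ _ _ => by
      simp only [frob, Matrix.smul_apply, smul_eq_mul, mul_left_comm, Finset.mul_sum])

@[simp]
theorem frobForm_apply (σ τ : Matrix (Fin d) (Fin m) ℝ) : frobForm σ τ = frob σ τ := rfl

theorem frob_comm (σ τ : Matrix (Fin d) (Fin m) ℝ) : frob σ τ = frob τ σ := by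
  simp only [frob, mul_comm]

theorem frob_vecMulVec_left (n : Fin d → ℝ) (w : Fin m → ℝ)
    (X : Matrix (Fin d) (Fin m) ℝ) :
    frob (vecMulVec n w) X = w ⬝ᵥ (n ᵥ* X) := by
  simp only [frob, vecMulVec_apply, dotProduct, vecMul, Finset.mul_sum]
  rw [Finset.sum_comm]
  exact Finset.sum_congr rfl fun _ _ => Finset.sum_congr rfl fun _ _ => by ring

variable (C : Matrix (Fin d) (Fin m) ℝ →ₗ[ℝ] Matrix (Fin d) (Fin m) ℝ)

theorem isPosSemidef_frobForm_compl₂ (hCsa : ∀ σ τ, frob σ (C τ) = frob (C σ) τ)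
    (hCpos : ∀ σ, 0 ≤ frob σ (C σ)) :
    LinearMap.BilinForm.IsPosSemidef (frobForm.compl₂ C) where
  eq σ τ := by simp only [LinearMap.compl₂_apply, frobForm_apply, hCsa σ τ, frob_comm]
  nonneg := hCpos

theorem frob_vecMulVec_map_vecMulVec (n : Fin d → ℝ) {M : Matrix (Fin m) (Fin m) ℝ}
    (hM : ∀ i j, M i j =
      frob (vecMulVec n (Pi.single i 1)) (C (vecMulVec n (Pi.single j 1))))
    (v : Fin m → ℝ) :
    frob (vecMulVec n v) (C (vecMulVec n v)) = v ⬝ᵥ (M *ᵥ v) := by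
  let L : (Fin m → ℝ) →ₗ[ℝ] Matrix (Fin d) (Fin m) ℝ := vecMulVecBilin ℝ ℝ n
  have hM' : M = LinearMap.toMatrix₂' ℝ ((frobForm.compl₂ C).compl₁₂ L L) := Matrix.ext hM
  rw [hM', ← Matrix.toLinearMap₂'_apply', Matrix.toLinearMap₂'_toMatrix']
  rfl

end Frobenius

theorem stmt_5_general (d m : ℕ)
    (C : Matrix (Fin d) (Fin m) ℝ →ₗ[ℝ] Matrix (Fin d) (Fin m) ℝ)
    (hCsa : ∀ σ τ : Matrix (Fin d) (Fin m) ℝ, frob σ (C τ) = frob (C σ) τ)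
    (hCpos : ∀ σ : Matrix (Fin d) (Fin m) ℝ, 0 ≤ frob σ (C σ))
    (n : Fin d → ℝ)
    (cn : Matrix (Fin m) (Fin m) ℝ)
    (hcn : ∀ i j, cn i j =
      frob (vecMulVec n (Pi.single i 1)) (C (vecMulVec n (Pi.single j 1))))
    (v : Fin m → ℝ) (σ : Matrix (Fin d) (Fin m) ℝ)
    (hv : ∀ i, v i = frob (vecMulVec n (Pi.single i 1)) (C σ))
    (hzero : v ⬝ᵥ (cn *ᵥ v) = 0) :
    v = 0 := by
  have hv' : v = n ᵥ* C σ := funext fun i => by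
    rw [hv, frob_vecMulVec_left, single_one_dotProduct]
  have hN : frob (vecMulVec n v) (C (vecMulVec n v)) = 0 := by
    rw [frob_vecMulVec_map_vecMulVec C n hcn, hzero]
  have hNσ :=
    (isPosSemidef_frobForm_compl₂ C hCsa hCpos).apply_eq_zero_of_self_eq_zero hN σ
  rw [LinearMap.compl₂_apply, frobForm_apply, frob_vecMulVec_left, ← hv'] at hNσ
  exact dotProduct_self_eq_zero.mp hNσ

theorem stmt_5 (d m : ℕ) (hd : 1 ≤ d) (hm : 1 ≤ m)
    (C : Matrix (Fin d) (Fin m) ℝ →ₗ[ℝ] Matrix (Fin d) (Fin m) ℝ)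
    (hCsa : ∀ σ τ : Matrix (Fin d) (Fin m) ℝ, frob σ (C τ) = frob (C σ) τ)
    (hCpos : ∀ σ : Matrix (Fin d) (Fin m) ℝ, 0 ≤ frob σ (C σ))
    (n : Fin d → ℝ)
    (cn : Matrix (Fin m) (Fin m) ℝ)
    (hcn : ∀ i j, cn i j =
      frob (vecMulVec n (Pi.single i 1)) (C (vecMulVec n (Pi.single j 1))))
    (v : Fin m → ℝ) (σ : Matrix (Fin d) (Fin m) ℝ)
    (hv : ∀ i, v i = frob (vecMulVec n (Pi.single i 1)) (C σ))
    (hzero : v ⬝ᵥ (cn *ᵥ v) = 0) :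
    v = 0 :=
  stmt_5_general d m C hCsa hCpos n cn hcn v σ hv hzero
end

section
/- Let d ≥ 1, M ≥ 1 and N ≥ 3 be integers, and set K := (ℤ/Nℤ)^d. Let M₀ ∈ ℂ^{M×M} be invertible, let A₀ ∈ ℂ^{M×M}, and for each s ∈ {1,…,d} let A_s⁺, A_s⁻ ∈ ℂ^{M×M}. Define block matrices 𝕄, 𝔸 ∈ ℂ^{(K×{1,…,M})×(K×{1,…,M})} by: 𝕄_{(k,i),(l,j)} = (M₀)_{ij} if l = k and 0 otherwise; 𝔸_{(k,i),(l,j)} = (A₀)_{ij} if l = k, (A_s⁺)_{ij} if l = k + δ_s, (A_s⁻)_{ij} if l = k − δ_s, and 0 otherwise, where δ_s ∈ K is the s-th standard unit vector (these cases are mutually exclusive since N ≥ 3). For z ∈ K define Z⁽ᶻ⁾ := M₀⁻¹·( A₀ + Σ_{s=1}^d ( e^{2πi·z_s/N}·A_s⁺ + e^{−2πi·z_s/N}·A_s⁻ ) ), where e^{2πi·a/N} for a ∈ ℤ/Nℤ is defined using any integer representative of a. If u₀ ∈ ℂ^M and λ ∈ ℂ satisfy Z⁽ᶻ⁾·u₀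 = λ·u₀, then the vector u⁽ᶻ⁾ ∈ ℂ^{K×{1,…,M}} defined by u⁽ᶻ⁾_{(k,i)} := e^{2πi·(Σ_s z_s·k_s)/N}·(u₀)_i satisfies 𝕄⁻¹·𝔸·u⁽ᶻ⁾ = λ·u⁽ᶻ⁾. -/
/-!
A block matrix on `K × n` whose only nonzero blocks sit at the offsets `l = k + δ` is a
translation-invariant operator, so it maps a plane wave `k ↦ χ k • u` (for an additive
character `χ` of `K`) to the plane wave of `(∑ χ δ • B_δ) u`. Both `𝕄` and `𝔸` are of this
form, with `𝕄` block diagonal, so `𝕄⁻¹ 𝔸` acts on the plane wave with frequency `z` through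
the symbol `Z⁽ᶻ⁾`, and an eigenpair of the symbol yields one of `𝕄⁻¹ 𝔸`.
-/

open Matrix

/-- `e^{2πi a / N}` for `a ∈ ℤ/Nℤ`, defined via the canonical representative
(it is well defined, i.e. independent of the choice of representative). -/
noncomputable def eN (N : ℕ) (a : ZMod N) : ℂ :=
  Complex.exp (2 * Real.pi * Complex.I * ((a.val : ℂ) / (N : ℂ)))

section ShiftBlock

variable {K n R : Type*} [AddCommGroup K] [CommRing R]

def planeWave (χ : AddChar K R) : (n → R) →ₗ[R] (K × n → R) where
  toFun u p := χ p.1 * u p.2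
  map_add' u v := by ext p; simp [mul_add]
  map_smul' c u := by ext p; simp [mul_left_comm]

@[simp]
lemma planeWave_apply (χ : AddChar K R) (u : n → R) (p : K × n) :
    planeWave χ u p = χ p.1 * u p.2 :=
  rfl

variable [DecidableEq K]

def shiftBlock (δ : K) (B : Matrix n n R) : Matrix (K × n) (K × n) R :=
  Matrix.of fun p q => if q.1 = p.1 + δ then B p.2 q.2 else 0

lemma shiftBlock_zero_one [DecidableEq n] : shiftBlock (0 : K) (1 : Matrix n n R) = 1 := by
  ext ⟨k, i⟩ ⟨l, j⟩
  simp [shiftBlock, one_apply, Prod.ext_iff, eq_comm, ite_and]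

variable [Fintype K] [Fintype n]

lemma shiftBlock_mulVec_planeWave (δ : K) (B : Matrix n n R) (χ : AddChar K R) (u : n → R) :
    shiftBlock δ B *ᵥ planeWave χ u = χ δ • planeWave χ (B *ᵥ u) := by
  ext ⟨k, i⟩
  simp only [shiftBlock, mulVec, dotProduct, of_apply, planeWave_apply, Fintype.sum_prod_type,
    ite_mul, zero_mul, Finset.sum_ite_irrel, Finset.sum_const_zero, Finset.sum_ite_eq',
    Finset.mem_univ, if_true, Pi.smul_apply, smul_eq_mul, Finset.mul_sum, AddChar.map_add_eq_mul]
  exact Finset.sum_congr rfl fun j _ => by ring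

lemma shiftBlock_mul_shiftBlock (δ ε : K) (B C : Matrix n n R) :
    shiftBlock δ B * shiftBlock ε C = shiftBlock (δ + ε) (B * C) := by
  ext ⟨k, i⟩ ⟨l, j⟩
  simp only [shiftBlock, mul_apply, of_apply, Fintype.sum_prod_type, ite_mul, zero_mul, mul_ite,
    mul_zero]
  rw [Finset.sum_eq_single (k + δ) (fun x _ hx => by simp [hx]) (by simp)]
  simp [add_assoc, Finset.sum_ite_irrel]

lemma inv_shiftBlock_zero [DecidableEq n] {B : Matrix n n R} (hB : IsUnit B.det) :
    (shiftBlock (0 : K) B)⁻¹ = shiftBlock 0 B⁻¹ := by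
  apply inv_eq_right_inv
  rw [shiftBlock_mul_shiftBlock, add_zero, mul_nonsing_inv B hB, shiftBlock_zero_one]

end ShiftBlock

noncomputable def eNChar (N : ℕ) [NeZero N] : AddChar (ZMod N) ℂ :=
  Circle.coeHom.compAddChar ZMod.toCircle

lemma eNChar_apply (N : ℕ) [NeZero N] (a : ZMod N) : eNChar N a = eN N a := by
  show ((ZMod.toCircle a : Circle) : ℂ) = _
  rw [ZMod.toCircle_apply, eN, mul_div_assoc]

noncomputable def expDotChar {ι : Type*} [Fintype ι] {N : ℕ} [NeZero N] (z : ι → ZMod N) :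
    AddChar (ι → ZMod N) ℂ :=
  (eNChar N).compAddMonoidHom (AddMonoidHom.mk' (z ⬝ᵥ ·) (dotProduct_add z))

lemma expDotChar_apply {ι : Type*} [Fintype ι] {N : ℕ} [NeZero N] (z k : ι → ZMod N) :
    expDotChar z k = eN N (z ⬝ᵥ k) :=
  eNChar_apply N _

theorem stmt_9_general (d m N : ℕ) [NeZero N]
    (M₀ A₀ : Matrix (Fin m) (Fin m) ℂ) (hM₀ : IsUnit M₀.det)
    (Ap Am : Fin d → Matrix (Fin m) (Fin m) ℂ)
    (MM AA : Matrix ((Fin d → ZMod N) × Fin m) ((Fin d → ZMod N) × Fin m) ℂ)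
    (hMM : ∀ (k l : Fin d → ZMod N) (i j : Fin m),
      MM (k, i) (l, j) = if l = k then M₀ i j else 0)
    (hAA : ∀ (k l : Fin d → ZMod N) (i j : Fin m),
      AA (k, i) (l, j) =
        (if l = k then A₀ i j else 0) +
          ∑ s : Fin d,
            ((if l = k + Pi.single s 1 then Ap s i j else 0) +
             (if l = k - Pi.single s 1 then Am s i j else 0)))
    (z : Fin d → ZMod N) (Z : Matrix (Fin m) (Fin m) ℂ)
    (hZ : Z = M₀⁻¹ * (A₀ + ∑ s : Fin d, (eN N (z s) • Ap s + eN N (-(z s)) • Am s)))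
    (u₀ : Fin m → ℂ) (lam : ℂ) (heig : Z *ᵥ u₀ = lam • u₀)
    (uz : (Fin d → ZMod N) × Fin m → ℂ)
    (huz : ∀ (k : Fin d → ZMod N) (i : Fin m),
      uz (k, i) = eN N (∑ s : Fin d, z s * k s) * u₀ i) :
    (MM⁻¹ * AA) *ᵥ uz = lam • uz := by
  set χ := expDotChar z
  have hMM' : MM = shiftBlock 0 M₀ := by
    ext ⟨k, i⟩ ⟨l, j⟩
    simp [hMM, shiftBlock]
  have hAA' : AA = shiftBlock 0 A₀ +
      ∑ s, (shiftBlock (Pi.single s 1) (Ap s) + shiftBlock (-Pi.single s 1) (Am s)) := by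
    ext ⟨k, i⟩ ⟨l, j⟩
    simp [hAA, shiftBlock, Matrix.sum_apply, sub_eq_add_neg]
  have huz' : uz = planeWave χ u₀ := by
    ext ⟨k, i⟩
    rw [huz, planeWave_apply, expDotChar_apply]
    rfl
  have hAAuz : AA *ᵥ uz = planeWave χ
      ((A₀ + ∑ s, (eN N (z s) • Ap s + eN N (-(z s)) • Am s)) *ᵥ u₀) := by
    simp only [hAA', huz', add_mulVec, sum_mulVec, smul_mulVec, shiftBlock_mulVec_planeWave,
      map_add, map_sum, map_smul, AddChar.map_zero_eq_one, one_smul, χ, expDotChar_apply,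
      dotProduct_single_one, dotProduct_neg]
  calc (MM⁻¹ * AA) *ᵥ uz
      = shiftBlock 0 M₀⁻¹ *ᵥ (AA *ᵥ uz) := by rw [← mulVec_mulVec, hMM', inv_shiftBlock_zero hM₀]
    _ = planeWave χ (Z *ᵥ u₀) := by
      rw [hAAuz, shiftBlock_mulVec_planeWave, AddChar.map_zero_eq_one, one_smul, hZ, mulVec_mulVec]
    _ = lam • uz := by rw [heig, map_smul, huz']

theorem stmt_9 (d m N : ℕ) (hd : 1 ≤ d) (hm : 1 ≤ m) (hN : 3 ≤ N) [NeZero N]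
    (M₀ A₀ : Matrix (Fin m) (Fin m) ℂ) (hM₀ : IsUnit M₀.det)
    (Ap Am : Fin d → Matrix (Fin m) (Fin m) ℂ)
    (MM AA : Matrix ((Fin d → ZMod N) × Fin m) ((Fin d → ZMod N) × Fin m) ℂ)
    (hMM : ∀ (k l : Fin d → ZMod N) (i j : Fin m),
      MM (k, i) (l, j) = if l = k then M₀ i j else 0)
    (hAA : ∀ (k l : Fin d → ZMod N) (i j : Fin m),
      AA (k, i) (l, j) =
        (if l = k then A₀ i j else 0) +
          ∑ s : Fin d,
            ((if l = k + Pi.single s 1 then Ap s i j else 0) +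
             (if l = k - Pi.single s 1 then Am s i j else 0)))
    (z : Fin d → ZMod N) (Z : Matrix (Fin m) (Fin m) ℂ)
    (hZ : Z = M₀⁻¹ * (A₀ + ∑ s : Fin d, (eN N (z s) • Ap s + eN N (-(z s)) • Am s)))
    (u₀ : Fin m → ℂ) (lam : ℂ) (heig : Z *ᵥ u₀ = lam • u₀)
    (uz : (Fin d → ZMod N) × Fin m → ℂ)
    (huz : ∀ (k : Fin d → ZMod N) (i : Fin m),
      uz (k, i) = eN N (∑ s : Fin d, z s * k s) * u₀ i) :
    (MM⁻¹ * AA) *ᵥ uz = lam • uz :=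
  stmt_9_general d m N M₀ A₀ hM₀ Ap Am MM AA hMM hAA z Z hZ u₀ lam heig uz huz
end
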